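/- arXiv:2308.10849 — 3 statements merged into one kernel-verified Lean document; each statement's English description precedes it below -/
import Mathlib

section
/- Let φ : ℝ → ℝ be continuous and 2π-periodic with zero mean. Then the function u(x) := (K∗φ)(x) is twice continuously differentiable on ℝ and satisfies u″(x) = −φ(x) for all x ∈ ℝ. -/
/-!
Shift the window of integration to `[x - π, x + π]` and split it at `x`: on each half `K(x - y)`
is a quadratic polynomial `k(x - y)`. Expanding `k(x - y)` in powers of `y` turns
`∫_{x+a}^{x+b} k(x - y) φ(y) dy` into a polynomial combination of primitives of `yʲ φ(y)`, which
gives the Leibniz rule: its derivative is `k(-b) φ(x + b) - k(-a) φ(x + a)` plus the same integral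
with `k'` in place of `k`. Since `K` is continuous and `K(π) = K(-π)`, the boundary terms of
`(K∗φ)'` cancel by periodicity, so `(K∗φ)' = K'∗φ`. Differentiating once more, the jump `-1` of
`K'` at `0` produces `-φ(x)`, while `K'' = 1/(2π)` integrates `φ` over a period, giving `0`.
-/

open Real MeasureTheory Filter

/-- The 2π-periodic kernel of `D⁻²`, equal to `(1/(4π))(|x|−π)² − π/12` on `[−π,π]`. -/
noncomputable def Kper (x : ℝ) : ℝ :=
  (1 / (4 * π)) * (|x - 2 * π * ((round (x / (2 * π)) : ℤ) : ℝ)| - π) ^ 2 - π / 12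

/-- Periodic convolution with the kernel `Kper`. -/
noncomputable def Kconv (φ : ℝ → ℝ) (x : ℝ) : ℝ :=
  ∫ y in (-π)..π, Kper (x - y) * φ y

open intervalIntegral Set

theorem Kper_periodic : Function.Periodic Kper (2 * π) := by
  intro x
  have hshift : (x + 2 * π) / (2 * π) = x / (2 * π) + ((1 : ℤ) : ℝ) := by
    push_cast; field_simp
  rw [Kper, Kper, hshift, round_add_intCast]
  push_cast
  ring_nf

theorem Kper_eq_of_abs_le {z : ℝ} (hz : |z| ≤ π) :
    Kper z = z ^ 2 / (4 * π) - |z| / 2 + π / 6 := by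
  have h2π : 0 < 2 * π := by positivity
  have hred : |z - 2 * π * ((round (z / (2 * π)) : ℤ) : ℝ)| = |z| := by
    obtain ⟨hlo, hhi⟩ := abs_le.mp hz
    rcases hhi.lt_or_eq with hlt | rfl
    · have hround : round (z / (2 * π)) = 0 := round_eq_zero_iff.mpr
        ⟨by rw [le_div_iff₀ h2π]; linarith, by rw [div_lt_iff₀ h2π]; linarith⟩
      simp [hround]
    · have hround : round (π / (2 * π)) = 1 := by
        rw [show π / (2 * π) = 1 / 2 by field_simp, round_eq]; norm_num
      rw [hround, show π - 2 * π * ((1 : ℤ) : ℝ) = -π by push_cast; ring, abs_neg]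
  rw [Kper, hred, sub_sq, sq_abs]
  field_simp
  ring

theorem Function.Periodic.apply_add_eq_apply_add_neg {f : ℝ → ℝ} {c : ℝ}
    (hf : Function.Periodic f (2 * c)) (x : ℝ) : f (x + c) = f (x + -c) := by
  rw [← hf (x + -c)]
  ring_nf

theorem hasDerivAt_integral_add_add {E : Type*} [NormedAddCommGroup E] [NormedSpace ℝ E]
    [CompleteSpace E] {f : ℝ → E} (hf : Continuous f) (a b x : ℝ) :
    HasDerivAt (fun x => ∫ y in (x + a)..(x + b), f y) (f (x + b) - f (x + a)) x := by
  have hP : ∀ c, HasDerivAt (fun x => ∫ y in (0 : ℝ)..(x + c), f y) (f (x + c)) x := fun c =>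
    (hf.integral_hasStrictDerivAt 0 (x + c)).hasDerivAt.comp_add_const x c
  refine ((hP b).sub (hP a)).congr_of_eventuallyEq (Eventually.of_forall fun x => ?_)
  exact (integral_interval_sub_left (hf.intervalIntegrable _ _) (hf.intervalIntegrable _ _)).symm

section WindowConv

variable {φ : ℝ → ℝ}

theorem integral_quadratic_mul (hφ : Continuous φ) (a b c₀ c₁ c₂ : ℝ) :
    ∫ y in a..b, (c₀ + c₁ * y + c₂ * y ^ 2) * φ y =
      c₀ * (∫ y in a..b, φ y) + c₁ * (∫ y in a..b, y * φ y) + c₂ * ∫ y in a..b, y ^ 2 * φ y := by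
  have hint : ∀ n : ℕ, IntervalIntegrable (fun y => y ^ n * φ y) volume a b := fun n =>
    (by fun_prop : Continuous fun y => y ^ n * φ y).intervalIntegrable a b
  have h0 : IntervalIntegrable φ volume a b := by simpa using hint 0
  have h1 : IntervalIntegrable (fun y => y * φ y) volume a b := by simpa using hint 1
  simp_rw [add_mul, mul_assoc]
  rw [integral_add ((h0.const_mul _).add (h1.const_mul _)) ((hint 2).const_mul _),
    integral_add (h0.const_mul _) (h1.const_mul _), intervalIntegral.integral_const_mul,
    intervalIntegral.integral_const_mul, intervalIntegral.integral_const_mul]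

noncomputable def windowConv (k φ : ℝ → ℝ) (a b x : ℝ) : ℝ :=
  ∫ y in (x + a)..(x + b), k (x - y) * φ y

theorem windowConv_quadratic {k : ℝ → ℝ} {c₀ c₁ c₂ : ℝ} (hk : ∀ t, k t = c₀ + c₁ * t + c₂ * t ^ 2)
    (hφ : Continuous φ) (a b x : ℝ) :
    windowConv k φ a b x =
      (c₀ + c₁ * x + c₂ * x ^ 2) * (∫ y in (x + a)..(x + b), φ y)
        - (c₁ + 2 * c₂ * x) * (∫ y in (x + a)..(x + b), y * φ y)
        + c₂ * ∫ y in (x + a)..(x + b), y ^ 2 * φ y := by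
  have hsep : ∀ y, k (x - y) =
      (c₀ + c₁ * x + c₂ * x ^ 2) + (-(c₁ + 2 * c₂ * x)) * y + c₂ * y ^ 2 := fun y => by
    rw [hk]; ring
  simp only [windowConv, hsep, integral_quadratic_mul hφ]
  ring

theorem hasDerivAt_windowConv {k k' : ℝ → ℝ} {c₀ c₁ c₂ : ℝ}
    (hk : ∀ t, k t = c₀ + c₁ * t + c₂ * t ^ 2) (hk' : ∀ t, k' t = c₁ + 2 * c₂ * t)
    (hφ : Continuous φ) (a b x : ℝ) :
    HasDerivAt (windowConv k φ a b)
      (k (-b) * φ (x + b) - k (-a) * φ (x + a) + windowConv k' φ a b x) x := by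
  have hM : ∀ n : ℕ, HasDerivAt (fun x => ∫ y in (x + a)..(x + b), y ^ n * φ y)
      ((x + b) ^ n * φ (x + b) - (x + a) ^ n * φ (x + a)) x :=
    fun n => hasDerivAt_integral_add_add (by fun_prop) a b x
  have hM₀ := hM 0
  have hM₁ := hM 1
  simp only [pow_zero, one_mul, pow_one] at hM₀ hM₁
  have hp : HasDerivAt (fun x => c₀ + c₁ * x + c₂ * x ^ 2) (c₁ + 2 * c₂ * x) x := by
    refine ((((hasDerivAt_id' x).const_mul c₁).const_add c₀).fun_add
      ((hasDerivAt_pow 2 x).const_mul c₂)).congr_deriv ?_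
    push_cast; ring
  have hq : HasDerivAt (fun x => c₁ + 2 * c₂ * x) (2 * c₂) x :=
    (((hasDerivAt_id' x).const_mul (2 * c₂)).const_add c₁).congr_deriv (mul_one _)
  have hk'' : ∀ t, k' t = c₁ + 2 * c₂ * t + 0 * t ^ 2 := fun t => by rw [hk']; ring
  rw [show windowConv k φ a b = _ from funext (windowConv_quadratic hk hφ a b)]
  refine (((hp.fun_mul hM₀).fun_sub (hq.fun_mul hM₁)).fun_add ((hM 2).const_mul c₂)).congr_deriv ?_
  rw [windowConv_quadratic hk'' hφ, hk, hk]
  ring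

end WindowConv

noncomputable def Kquad (s t : ℝ) : ℝ := t ^ 2 / (4 * π) - s * t / 2 + π / 6

noncomputable def Kquad' (s t : ℝ) : ℝ := t / (2 * π) - s / 2

theorem Kper_eq_Kquad_one {t : ℝ} (h₀ : 0 ≤ t) (hπ : t ≤ π) : Kper t = Kquad 1 t := by
  rw [Kper_eq_of_abs_le (abs_le.mpr ⟨by linarith, hπ⟩), abs_of_nonneg h₀, Kquad, one_mul]

theorem Kper_eq_Kquad_neg_one {t : ℝ} (hπ : -π ≤ t) (h₀ : t ≤ 0) : Kper t = Kquad (-1) t := by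
  rw [Kper_eq_of_abs_le (abs_le.mpr ⟨hπ, by linarith⟩), abs_of_nonpos h₀, Kquad]
  ring

section Kconv

variable {φ : ℝ → ℝ}

theorem Kconv_eq_windowConv (hφ : Continuous φ) (hφp : Function.Periodic φ (2 * π)) :
    Kconv φ = windowConv (Kquad 1) φ (-π) 0 + windowConv (Kquad (-1)) φ 0 π := by
  funext x
  set f := fun y => Kper (x - y) * φ y
  have hf : Function.Periodic f (2 * π) := fun y => by
    simp only [f, hφp y, show x - (y + 2 * π) = x - y - 2 * π by ring, Kper_periodic.sub_eq]
  have hleft : EqOn (fun y => Kquad 1 (x - y) * φ y) f (uIcc (x + -π) (x + 0)) := by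
    intro y hy
    rw [uIcc_of_le (by linarith [pi_pos])] at hy
    simp only [f, Kper_eq_Kquad_one (t := x - y) (by linarith [hy.2]) (by linarith [hy.1])]
  have hright : EqOn (fun y => Kquad (-1) (x - y) * φ y) f (uIcc (x + 0) (x + π)) := by
    intro y hy
    rw [uIcc_of_le (by linarith [pi_pos])] at hy
    simp only [f, Kper_eq_Kquad_neg_one (t := x - y) (by linarith [hy.2]) (by linarith [hy.1])]
  have hcont : ∀ s, Continuous fun y => Kquad s (x - y) * φ y := fun s => by
    unfold Kquad; fun_prop
  calc Kconv φ x = ∫ y in (x + -π)..(x + π), f y := by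
        simpa [Kconv, two_mul, ← add_assoc] using hf.intervalIntegral_add_eq (-π) (x + -π)
    _ = (∫ y in (x + -π)..(x + 0), f y) + ∫ y in (x + 0)..(x + π), f y :=
        (integral_add_adjacent_intervals
          (((hcont 1).intervalIntegrable _ _).congr (hleft.mono uIoc_subset_uIcc))
          (((hcont (-1)).intervalIntegrable _ _).congr (hright.mono uIoc_subset_uIcc))).symm
    _ = _ := by rw [← integral_congr hleft, ← integral_congr hright]; rfl

noncomputable def KconvDeriv (φ : ℝ → ℝ) : ℝ → ℝ :=
  windowConv (Kquad' 1) φ (-π) 0 + windowConv (Kquad' (-1)) φ 0 π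

theorem hasDerivAt_Kconv (hφ : Continuous φ) (hφp : Function.Periodic φ (2 * π)) (x : ℝ) :
    HasDerivAt (Kconv φ) (KconvDeriv φ x) x := by
  have hk : ∀ s t, Kquad s t = π / 6 + -s / 2 * t + 1 / (4 * π) * t ^ 2 := by
    intro s t; unfold Kquad; ring
  have hk' : ∀ s t, Kquad' s t = -s / 2 + 2 * (1 / (4 * π)) * t := by
    intro s t; unfold Kquad'; field_simp; ring
  rw [Kconv_eq_windowConv hφ hφp]
  refine ((hasDerivAt_windowConv (hk 1) (hk' 1) hφ _ _ x).add
    (hasDerivAt_windowConv (hk (-1)) (hk' (-1)) hφ _ _ x)).congr_deriv ?_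
  simp only [KconvDeriv, Pi.add_apply, Kquad, hφp.apply_add_eq_apply_add_neg x]
  ring

theorem hasDerivAt_KconvDeriv (hφ : Continuous φ) (hφp : Function.Periodic φ (2 * π))
    (hφ₀ : ∫ y in (-π)..π, φ y = 0) (x : ℝ) :
    HasDerivAt (KconvDeriv φ) (-φ x) x := by
  have hk : ∀ s t, Kquad' s t = -s / 2 + 1 / (2 * π) * t + 0 * t ^ 2 := by
    intro s t; unfold Kquad'; ring
  have hk' : ∀ t : ℝ, (fun _ => 1 / (2 * π)) t = 1 / (2 * π) + 2 * 0 * t := by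
    intro t; ring
  have hmean : windowConv (fun _ => 1 / (2 * π)) φ (-π) 0 x
      + windowConv (fun _ => 1 / (2 * π)) φ 0 π x = 0 := by
    have hshift := hφp.intervalIntegral_add_eq (x + -π) (-π)
    rw [show x + -π + 2 * π = x + π by ring, show -π + 2 * π = π by ring, hφ₀] at hshift
    simp only [windowConv, intervalIntegral.integral_const_mul, ← mul_add,
      integral_add_adjacent_intervals (hφ.intervalIntegrable _ _) (hφ.intervalIntegrable _ _),
      hshift, mul_zero]
  refine ((hasDerivAt_windowConv (hk 1) hk' hφ _ _ x).add
    (hasDerivAt_windowConv (hk (-1)) hk' hφ _ _ x)).congr_deriv ?_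
  have hhalf : π / (2 * π) = 1 / 2 := by field_simp
  simp only [Kquad', hφp.apply_add_eq_apply_add_neg x, add_zero, neg_zero, zero_div, neg_neg,
    neg_div, hhalf]
  linear_combination hmean

end Kconv

theorem contDiff_two_of_hasDerivAt {𝕜 F : Type*} [NontriviallyNormedField 𝕜]
    [NormedAddCommGroup F] [NormedSpace 𝕜 F] {f f' f'' : 𝕜 → F}
    (hf : ∀ x, HasDerivAt f (f' x) x) (hf' : ∀ x, HasDerivAt f' (f'' x) x)
    (hf'' : Continuous f'') : ContDiff 𝕜 2 f := by
  rw [show (2 : WithTop ℕ∞) = 1 + 1 from rfl, contDiff_succ_iff_deriv,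
    funext fun x => (hf x).deriv, contDiff_one_iff_deriv, funext fun x => (hf' x).deriv]
  exact ⟨fun x => (hf x).differentiableAt, by simp, fun x => (hf' x).differentiableAt, hf''⟩

/-- If `φ` is continuous, 2π-periodic with zero mean, then `K∗φ` is `C²` with
`(K∗φ)″ = −φ`. -/
theorem Kconv_C2 (φ : ℝ → ℝ) (hφc : Continuous φ) (hφp : Function.Periodic φ (2 * π))
    (hφ0 : (∫ y in (-π)..π, φ y) = 0) :
    ContDiff ℝ 2 (Kconv φ) ∧ ∀ x, deriv (deriv (Kconv φ)) x = -φ x := by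
  have h₁ := hasDerivAt_Kconv hφc hφp
  have h₂ := hasDerivAt_KconvDeriv hφc hφp hφ0
  refine ⟨contDiff_two_of_hasDerivAt h₁ h₂ hφc.neg, fun x => ?_⟩
  rw [funext fun x => (h₁ x).deriv, (h₂ x).deriv]
end

section
/- Let β ∈ [0,1), let k be a positive integer, and set c := 1/k² − β·k²; assume c > 0. Let ψ : ℝ → ℝ be continuous, 2π-periodic, even, with zero mean, and suppose that for every nonzero integer j the Fourier coefficient ψ̂(j) := (1/(2π))∫_{−π}^{π} ψ(x)·e^{−ijx} dx satisfies (1 − 1/(c·j² + β·j⁴))·ψ̂(j) = 0. Then there exists A ∈ ℝ such that ψ(x) = A·cos(kx) for all x ∈ ℝ. -/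
/-!
At `c = 1/k² − βk²` the symbol `c j² + β j⁴` equals `1` exactly when `j² = k²`, since it is
strictly increasing in `j²`. So the hypothesis kills every Fourier coefficient of `ψ` except
those at `±k` (the zeroth vanishes by the zero mean), the Fourier series of `ψ` is the finite
sum `a e^{ikx} + b e^{-ikx}`, and averaging it with its reflection, as `ψ` is even, gives
`ψ x = (a + b) cos (kx)`.
-/

open Real

local instance : Fact (0 < 2 * π) := ⟨two_pi_pos⟩

theorem strictMonoOn_mul_add_mul_sq {c β : ℝ} (hc : 0 < c) (hβ : 0 ≤ β) :
    StrictMonoOn (fun t : ℝ => c * t + β * t ^ 2) (Set.Ici 0) := by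
  intro s (hs : 0 ≤ s) t (ht : 0 ≤ t) hst
  nlinarith [mul_nonneg hβ (add_nonneg hs ht)]

/-- At `j = 0` this holds through the convention `1 / 0 = 0`. -/
theorem one_sub_one_div_symbol_ne_zero {β k j : ℝ} (hβ : 0 ≤ β) (hk : k ≠ 0)
    (hc : 0 < 1 / k ^ 2 - β * k ^ 2) (hjk : j ^ 2 ≠ k ^ 2) :
    1 - 1 / ((1 / k ^ 2 - β * k ^ 2) * j ^ 2 + β * j ^ 4) ≠ 0 := by
  set c := 1 / k ^ 2 - β * k ^ 2
  have hck : c * k ^ 2 + β * (k ^ 2) ^ 2 = 1 := by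
    simp only [c]; field_simp; ring
  intro h
  have hcj : c * j ^ 2 + β * (j ^ 2) ^ 2 = 1 := by
    rw [← pow_mul, ← inv_eq_one, ← one_div]
    linarith
  exact hjk <| (strictMonoOn_mul_add_mul_sq hc hβ).injOn (sq_nonneg j) (sq_nonneg k)
    (hcj.trans hck.symm)

theorem eq_sum_fourier_of_fourierCoeff_eq_zero {T : ℝ} [Fact (0 < T)] (f : C(AddCircle T, ℂ))
    (s : Finset ℤ) (hs : ∀ n ∉ s, fourierCoeff f n = 0) (x : AddCircle T) :
    f x = ∑ n ∈ s, fourierCoeff f n • fourier n x :=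
  (has_pointwise_sum_fourier_series_of_summable (summable_of_ne_finset_zero hs) x).unique
    (hasSum_sum_of_ne_finset_zero fun n hn => by rw [hs n hn, zero_smul])

theorem fourier_coe_two_pi (n : ℤ) (x : ℝ) :
    fourier n (x : AddCircle (2 * π)) = Complex.exp (n * x * Complex.I) := by
  rw [fourier_coe_apply]
  congr 1
  field_simp
  push_cast
  ring

theorem fourierCoeff_periodic_lift {f : ℝ → ℂ} (hf : Function.Periodic f (2 * π)) (n : ℤ) :
    fourierCoeff hf.lift n = ((1 / (2 * π) : ℝ) : ℂ) *
      ∫ x in (-π)..π, f x * Complex.exp (-Complex.I * n * x) := by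
  rw [fourierCoeff_eq_intervalIntegral _ n (-π), show -π + 2 * π = π by ring, Complex.real_smul]
  congr 1
  refine intervalIntegral.integral_congr fun x _ => ?_
  rw [smul_eq_mul, hf.lift_coe, fourier_coe_two_pi, mul_comm]
  push_cast
  ring_nf

theorem eq_mul_cos_of_even_of_eq_fourier {f : ℝ → ℝ} (hf : ∀ x, f (-x) = f x) (a b : ℂ) (n : ℤ)
    (h : ∀ x : ℝ, (f x : ℂ) = a * fourier n (x : AddCircle (2 * π)) +
      b * fourier (-n) (x : AddCircle (2 * π)))
    (x : ℝ) : f x = (a + b).re * cos (n * x) := by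
  have h2 : ((f x + f (-x) : ℝ) : ℂ) = (a + b) * ((2 * cos (n * x) : ℝ) : ℂ) := by
    rw [Complex.ofReal_add, h, h, Complex.ofReal_mul, Complex.ofReal_ofNat, Complex.ofReal_cos,
      Complex.two_cos]
    simp only [fourier_coe_two_pi]
    push_cast
    ring_nf
  have := congrArg Complex.re h2
  rw [Complex.re_mul_ofReal, Complex.ofReal_re, hf x] at this
  linarith

theorem kernel_one_dimensional_general (β : ℝ) (hβ0 : 0 ≤ β) (k : ℕ) (hk : 0 < k)
    (hc : 0 < 1 / (k : ℝ) ^ 2 - β * (k : ℝ) ^ 2)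
    (ψ : ℝ → ℝ) (hψc : Continuous ψ) (hψp : Function.Periodic ψ (2 * π))
    (hψe : ∀ x, ψ (-x) = ψ x) (hψ0 : (∫ y in (-π)..π, ψ y) = 0)
    (hker : ∀ j : ℤ, j ≠ 0 →
      ((1 : ℂ) -
          ((1 / ((1 / (k : ℝ) ^ 2 - β * (k : ℝ) ^ 2) * (j : ℝ) ^ 2 + β * (j : ℝ) ^ 4) : ℝ) : ℂ)) *
        (((1 / (2 * π) : ℝ) : ℂ) *
          ∫ x in (-π)..π, (ψ x : ℂ) * Complex.exp (-Complex.I * (j : ℂ) * (x : ℂ))) = 0) :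
    ∃ A : ℝ, ∀ x, ψ x = A * Real.cos ((k : ℝ) * x) := by
  have hΨp : Function.Periodic (fun x => (ψ x : ℂ)) (2 * π) := fun x => by simp only [hψp x]
  let F : C(AddCircle (2 * π), ℂ) :=
    ⟨hΨp.lift, continuous_coinduced_dom.mpr (Complex.continuous_ofReal.comp hψc)⟩
  have hcoeff : ∀ n ∉ ({(k : ℤ), -(k : ℤ)} : Finset ℤ), fourierCoeff F n = 0 := by
    intro n hn
    rw [show ⇑F = hΨp.lift from rfl, fourierCoeff_periodic_lift]
    rcases eq_or_ne n 0 with rfl | hn0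
    · simp [intervalIntegral.integral_ofReal, hψ0]
    have hnk : (n : ℝ) ^ 2 ≠ (k : ℝ) ^ 2 := fun h => by
      simp only [Finset.mem_insert, Finset.mem_singleton, not_or] at hn
      rcases sq_eq_sq_iff_eq_or_eq_neg.1 h with h | h
      exacts [hn.1 (by exact_mod_cast h), hn.2 (by exact_mod_cast h)]
    have hsymb := one_sub_one_div_symbol_ne_zero hβ0 (Nat.cast_ne_zero.2 hk.ne') hc hnk
    exact (mul_eq_zero.1 (hker n hn0)).resolve_left (by exact_mod_cast hsymb)
  refine ⟨_, eq_mul_cos_of_even_of_eq_fourier hψe (fourierCoeff F k) (fourierCoeff F (-k)) k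
    fun x => ?_⟩
  have hk' : (k : ℤ) ≠ -k := by omega
  have hx := eq_sum_fourier_of_fourierCoeff_eq_zero F _ hcoeff (x : AddCircle (2 * π))
  rwa [Finset.sum_pair hk'] at hx

/-- One-dimensionality of the kernel of the linearization
`−Id + (cD² + βD⁴)⁻¹` at the bifurcation speed `c = 1/k² − βk²`: any continuous,
even, zero-mean, 2π-periodic `ψ` whose nonzero Fourier coefficients are killed by the
symbol is a multiple of `cos(k·)`. -/
theorem kernel_one_dimensional (β : ℝ) (hβ0 : 0 ≤ β) (hβ1 : β < 1) (k : ℕ) (hk : 0 < k)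
    (hc : 0 < 1 / (k : ℝ) ^ 2 - β * (k : ℝ) ^ 2)
    (ψ : ℝ → ℝ) (hψc : Continuous ψ) (hψp : Function.Periodic ψ (2 * π))
    (hψe : ∀ x, ψ (-x) = ψ x) (hψ0 : (∫ y in (-π)..π, ψ y) = 0)
    (hker : ∀ j : ℤ, j ≠ 0 →
      ((1 : ℂ) -
          ((1 / ((1 / (k : ℝ) ^ 2 - β * (k : ℝ) ^ 2) * (j : ℝ) ^ 2 + β * (j : ℝ) ^ 4) : ℝ) : ℂ)) *
        (((1 / (2 * π) : ℝ) : ℂ) *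
          ∫ x in (-π)..π, (ψ x : ℂ) * Complex.exp (-Complex.I * (j : ℂ) * (x : ℂ))) = 0) :
    ∃ A : ℝ, ∀ x, ψ x = A * Real.cos ((k : ℝ) * x) :=
  kernel_one_dimensional_general β hβ0 k hk hc ψ hψc hψp hψe hψ0 hker
end

section
/- Kernel positivity: let K : ℝ → ℝ be the 2π-periodic function determined by K(x) = (1/(4π))(|x|−π)² − π/12 for x ∈ [−π,π]. Then for every λ ∈ ℝ, every x̄ ∈ (λ, λ+π), and every y ∈ (λ, λ+π), one has K(x̄ − y) − K(x̄ + y − 2λ) > 0. -/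
open Real MeasureTheory Filter

/-- Positivity of the reflected kernel difference: for `x̄, y ∈ (λ, λ+π)` one has
`K(x̄ − y) − K(x̄ + y − 2λ) > 0`. -/
theorem kernel_positivity (l xb y : ℝ) (hx : xb ∈ Set.Ioo l (l + π))
    (hy : y ∈ Set.Ioo l (l + π)) :
    0 < Kper (xb - y) - Kper (xb + y - 2 * l) := by
  obtain ⟨hx1, hx2⟩ := hx
  obtain ⟨hy1, hy2⟩ := hy
  have hπ : (0:ℝ) < π := Real.pi_pos
  have h2π : (0:ℝ) < 2 * π := by linarith
  set a := xb - y with ha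
  set b := xb + y - 2 * l with hb
  have ha1 : -π < a := by rw [ha]; linarith
  have ha2 : a < π := by rw [ha]; linarith
  have hba1 : a < b := by rw [ha, hb]; linarith
  have hba2 : -b < a := by rw [ha, hb]; linarith
  have hb1 : 0 < b := by rw [hb]; linarith
  have hb2 : b < 2 * π := by rw [hb]; linarith
  have habs : |a| < b := abs_lt.mpr ⟨hba2, hba1⟩
  have habs2 : |a| < 2 * π - b := by
    rw [abs_lt]
    constructor <;> [rw [ha, hb]; rw [ha, hb]] <;> linarith
  have hra : round (a / (2 * π)) = 0 := by
    rw [round_eq, Int.floor_eq_zero_iff]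
    constructor
    · rw [div_add' _ _ _ (ne_of_gt h2π), le_div_iff₀ h2π]
      nlinarith
    · rw [div_add' _ _ _ (ne_of_gt h2π), div_lt_one h2π]
      nlinarith
  rcases lt_or_ge b π with hbπ | hbπ
  · -- b < π, round (b / (2π)) = 0
    have hrb : round (b / (2 * π)) = 0 := by
      rw [round_eq, Int.floor_eq_zero_iff]
      constructor
      · rw [div_add' _ _ _ (ne_of_gt h2π)]
        positivity
      · rw [div_add' _ _ _ (ne_of_gt h2π), div_lt_one h2π]
        linarith
    rw [Kper, Kper, hra, hrb]
    push_cast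
    simp only [mul_zero, sub_zero]
    rw [abs_of_pos hb1]
    have h1 : (1:ℝ)/(4*π) > 0 := by positivity
    have h2 : (|a| - π)^2 > (b - π)^2 := by
      nlinarith [abs_nonneg a]
    nlinarith [mul_pos h1 (sub_pos.mpr h2)]
  · -- π ≤ b < 2π, round (b / (2π)) = 1
    have hrb : round (b / (2 * π)) = 1 := by
      rw [round_eq]
      have : ⌊b / (2 * π) + 1 / 2⌋ = (1:ℤ) := by
        rw [Int.floor_eq_iff]
        push_cast
        constructor
        · rw [div_add' _ _ _ (ne_of_gt h2π), le_div_iff₀ h2π]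
          nlinarith
        · rw [div_add' _ _ _ (ne_of_gt h2π), div_lt_iff₀ h2π]
          nlinarith
      exact this
    rw [Kper, Kper, hra, hrb]
    push_cast
    simp only [mul_zero, sub_zero]
    have habsb : |b - 2 * π * 1| = 2 * π - b := by
      rw [abs_of_nonpos (by linarith)]; ring
    rw [habsb]
    have h1 : (1:ℝ)/(4*π) > 0 := by positivity
    have h2 : (|a| - π)^2 > (2 * π - b - π)^2 := by
      nlinarith [abs_nonneg a]
    nlinarith [mul_pos h1 (sub_pos.mpr h2)]
end
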